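/- Let π = 2 + 3i ∈ ℤ[i], so that 𝔽 = ℤ[i]/(π) is a field with 13 elements. For all positive integers n ≥ k ≥ 1, d_π(n, k) ≤ 2(n − k + 1) − ⌈(n − k + 1)/3⌉. -/
import Mathlib


open scoped Classical

noncomputable section

/-- The quotient ring `ℤ[i]/(π)`. -/
abbrev GQuot (pi : GaussianInt) : Type := GaussianInt ⧸ Ideal.span {pi}

/-- The quotient map `ℤ[i] → ℤ[i]/(π)`. -/
def gmk (pi : GaussianInt) : GaussianInt →+* GQuot pi := Ideal.Quotient.mk (Ideal.span {pi})

/-- Mannheim weight of an element of `ℤ[i]/(π)`: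
the minimum of `|x| + |y|` over representatives `x + y·i`. -/
def mWt (pi : GaussianInt) (α : GQuot pi) : ℕ :=
  sInf { w : ℕ | ∃ z : GaussianInt, gmk pi z = α ∧ z.re.natAbs + z.im.natAbs = w }

/-- Mannheim weight of a vector: the sum of the Mannheim weights of its coordinates. -/
def mWtVec (pi : GaussianInt) {n : ℕ} (v : Fin n → GQuot pi) : ℕ := ∑ i, mWt pi (v i)

/-- Hamming weight of a vector: the number of nonzero coordinates. -/
def hWtVec {n : ℕ} {F : Type*} [Zero F] (v : Fin n → F) : ℕ :=
  Set.ncard { i : Fin n | v i ≠ 0 }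

/-- Minimum Mannheim distance of a linear code (minimum Mannheim weight of a
nonzero codeword). -/
def dPiCode (pi : GaussianInt) {n : ℕ} (C : Submodule (GQuot pi) (Fin n → GQuot pi)) : ℕ :=
  sInf { w : ℕ | ∃ c ∈ C, c ≠ 0 ∧ mWtVec pi c = w }

/-- Minimum Hamming distance of a linear code. -/
def dHCode (pi : GaussianInt) {n : ℕ} (C : Submodule (GQuot pi) (Fin n → GQuot pi)) : ℕ :=
  sInf { w : ℕ | ∃ c ∈ C, c ≠ 0 ∧ hWtVec c = w }

/-- `dPiMax pi n k`: the maximum minimum Mannheim distance over all `[n,k]` codes. -/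
def dPiMax (pi : GaussianInt) (n k : ℕ) : ℕ :=
  sSup { d : ℕ | ∃ C : Submodule (GQuot pi) (Fin n → GQuot pi),
    Module.finrank (GQuot pi) C = k ∧ dPiCode pi C = d }

/-- `dHMax pi n k`: the maximum minimum Hamming distance over all `[n,k]` codes. -/
def dHMax (pi : GaussianInt) (n k : ℕ) : ℕ :=
  sSup { d : ℕ | ∃ C : Submodule (GQuot pi) (Fin n → GQuot pi),
    Module.finrank (GQuot pi) C = k ∧ dHCode pi C = d }

namespace Stmt9Aux

/-- The ring hom `ℤ[i] → ℤ/13` sending `i` to `8`. -/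
def φ : GaussianInt →+* ZMod 13 := Zsqrtd.lift ⟨8, by decide⟩

lemma φ_apply (z : GaussianInt) : φ z = (z.re : ZMod 13) + (z.im : ZMod 13) * 8 := rfl

lemma dvd_iff_φ (z : GaussianInt) : (⟨2,3⟩ : GaussianInt) ∣ z ↔ φ z = 0 := by
  constructor
  · rintro ⟨w, rfl⟩
    rw [map_mul, show φ ⟨2,3⟩ = 0 by rw [φ_apply]; decide, zero_mul]
  · intro h
    rw [φ_apply] at h
    have h13 : (13:ℤ) ∣ z.re + z.im * 8 := by
      have : ((z.re + z.im * 8 : ℤ) : ZMod 13) = 0 := by push_cast; rw [h]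
      exact_mod_cast (ZMod.intCast_zmod_eq_zero_iff_dvd _ 13).mp this
    obtain ⟨t, ht⟩ := h13
    refine ⟨⟨2*t - z.im, -3*t + 2*z.im⟩, ?_⟩
    ext <;> simp [Zsqrtd.re_mul, Zsqrtd.im_mul] <;> linarith

lemma irr : Irreducible (⟨2,3⟩ : GaussianInt) := by
  rw [irreducible_iff]
  constructor
  · intro h
    have := Zsqrtd.norm_eq_one_iff.mpr h
    simp [Zsqrtd.norm] at this
  · intro a b hab
    have hn : a.norm.natAbs * b.norm.natAbs = 13 := by
      rw [← Int.natAbs_mul, ← Zsqrtd.norm_mul, ← hab]; rfl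
    have h13 : Nat.Prime 13 := by norm_num
    rcases h13.eq_one_or_self_of_dvd a.norm.natAbs ⟨_, hn.symm⟩ with h | h
    · exact Or.inl (Zsqrtd.norm_eq_one_iff.mp h)
    · rw [h] at hn
      exact Or.inr (Zsqrtd.norm_eq_one_iff.mp (by omega))

instance : (Ideal.span {(⟨2,3⟩ : GaussianInt)}).IsMaximal :=
  PrincipalIdealRing.isMaximal_of_irreducible irr

instance : Field (GQuot (⟨2,3⟩:GaussianInt)) := Ideal.Quotient.field _

lemma gmk_surj : Function.Surjective (gmk (⟨2,3⟩:GaussianInt)) :=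
  Ideal.Quotient.mk_surjective

lemma gmk_eq_iff (z w : GaussianInt) :
    gmk (⟨2,3⟩:GaussianInt) z = gmk (⟨2,3⟩:GaussianInt) w ↔ φ z = φ w := by
  rw [gmk, Ideal.Quotient.mk_eq_mk_iff_sub_mem, Ideal.mem_span_singleton, dvd_iff_φ,
    map_sub, sub_eq_zero]

lemma gmk_eq_zero_iff (z : GaussianInt) : gmk (⟨2,3⟩:GaussianInt) z = 0 ↔ φ z = 0 := by
  rw [show (0 : GQuot (⟨2,3⟩:GaussianInt)) = gmk (⟨2,3⟩:GaussianInt) 0 from (map_zero _).symm,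
    gmk_eq_iff, map_zero]

lemma mWt_le (z : GaussianInt) (α : GQuot (⟨2,3⟩:GaussianInt))
    (h : gmk (⟨2,3⟩:GaussianInt) z = α) :
    mWt (⟨2,3⟩:GaussianInt) α ≤ z.re.natAbs + z.im.natAbs := Nat.sInf_le ⟨z, h, rfl⟩

lemma mWt_zero : mWt (⟨2,3⟩:GaussianInt) 0 = 0 :=
  Nat.le_zero.mp (by simpa using mWt_le 0 0 (map_zero _))

lemma mWt_le_two (α : GQuot (⟨2,3⟩:GaussianInt)) : mWt (⟨2,3⟩:GaussianInt) α ≤ 2 := by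
  obtain ⟨z, rfl⟩ := gmk_surj α
  have key : ∀ v : ZMod 13, ∃ r ∈ [((0:GaussianInt)), 1, -1, ⟨0,1⟩, ⟨0,-1⟩, 2, -2, ⟨0,2⟩,
      ⟨0,-2⟩, ⟨1,1⟩, ⟨-1,-1⟩, ⟨1,-1⟩, ⟨-1,1⟩], φ r = v ∧ r.re.natAbs + r.im.natAbs ≤ 2 := by
    decide
  obtain ⟨r, -, hr, hw⟩ := key (φ z)
  exact le_trans (mWt_le r _ ((gmk_eq_iff r z).mpr hr)) hw

lemma exists_scale (α : GQuot (⟨2,3⟩:GaussianInt)) (hα : α ≠ 0) :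
    ∃ j : Fin 3, mWt (⟨2,3⟩:GaussianInt) (gmk (⟨2,3⟩:GaussianInt) (2 ^ (j:ℕ)) * α) ≤ 1 := by
  obtain ⟨z, rfl⟩ := gmk_surj α
  have hz : φ z ≠ 0 := fun h => hα ((gmk_eq_zero_iff z).mpr h)
  have key : ∀ v : ZMod 13, v ≠ 0 → ∃ j : Fin 3, ∃ r ∈ [((1:GaussianInt)), -1,
      (⟨0,1⟩:GaussianInt), ⟨0,-1⟩], φ r = 2^(j:ℕ) * v ∧ r.re.natAbs + r.im.natAbs ≤ 1 := by
    decide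
  obtain ⟨j, r, -, hr, hw⟩ := key (φ z) hz
  refine ⟨j, le_trans (mWt_le r _ ?_) hw⟩
  rw [← map_mul, gmk_eq_iff, hr, map_mul, map_pow, map_ofNat]

lemma gmk_two_pow_ne (j : Fin 3) : gmk (⟨2,3⟩:GaussianInt) (2 ^ (j:ℕ)) ≠ 0 := by
  rw [Ne, gmk_eq_zero_iff, map_pow, map_ofNat]
  fin_cases j <;> decide

end Stmt9Aux

open Stmt9Aux in
/-- for `π = 2 + 3i` (so `𝔽 ≅ 𝔽₁₃`) and `n ≥ k ≥ 1`,
`d_π(n,k) ≤ 2(n-k+1) - ⌈(n-k+1)/3⌉`. -/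
theorem stmt9 (n k : ℕ) (hk : 1 ≤ k) (hn : k ≤ n) :
    dPiMax (⟨2, 3⟩ : GaussianInt) n k
      ≤ 2 * (n - k + 1) - ⌈((n - k + 1 : ℕ) : ℚ) / 3⌉₊ := by
  set π : GaussianInt := ⟨2,3⟩ with hπ
  set F := GQuot π
  obtain ⟨m, hm⟩ : ∃ m, n - k + 1 = m := ⟨_, rfl⟩
  rw [hm]
  have hmk : m = n - k + 1 := hm.symm
  set cm := ⌈(m : ℚ) / 3⌉₊ with hcm
  -- basic facts about the ceiling
  have hceil1 : m ≤ 3 * cm := by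
    have h := Nat.le_ceil ((m : ℚ) / 3)
    rw [div_le_iff₀ (by norm_num)] at h
    have h' : (m:ℚ) ≤ ((3 * cm : ℕ) : ℚ) := by rw [hcm]; push_cast; linarith
    exact_mod_cast h'
  have hceil2 : 3 * cm ≤ m + 2 := by
    have h : cm ≤ (m + 2) / 3 := by
      rw [hcm]
      refine Nat.ceil_le.mpr ?_
      rw [div_le_iff₀ (by norm_num)]
      have h : m ≤ 3 * ((m + 2) / 3) := by omega
      have h' : ((m:ℕ):ℚ) ≤ ((3 * ((m + 2) / 3) : ℕ) : ℚ) := by exact_mod_cast h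
      push_cast at h' ⊢
      linarith
    omega
  refine csSup_le' ?_
  rintro d ⟨C, hC, rfl⟩
  -- find a nonzero codeword vanishing on the first k-1 coordinates
  have hkn : k - 1 ≤ n := by omega
  let f : C →ₗ[F] (Fin (k-1) → F) :=
    (LinearMap.funLeft F F (Fin.castLE hkn)).comp C.subtype
  have hker : LinearMap.ker f ≠ ⊥ := by
    intro hbot
    have hinj : Function.Injective f := LinearMap.ker_eq_bot.mp hbot
    have := LinearMap.finrank_le_finrank_of_injective hinj
    rw [hC, Module.finrank_fin_fun] at this
    omega
  obtain ⟨x, hxker, hxne⟩ := Submodule.ne_bot_iff _ |>.mp hker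
  set c : Fin n → F := (x : Fin n → F) with hc
  have hcC : c ∈ C := x.2
  have hcne : c ≠ 0 := fun h => hxne (Subtype.ext h)
  have hczero : ∀ i : Fin (k-1), c (Fin.castLE hkn i) = 0 := by
    intro i
    have := LinearMap.mem_ker.mp hxker
    exact congrFun this i
  -- the support
  set S : Finset (Fin n) := Finset.univ.filter (fun i => c i ≠ 0) with hS
  have hsle : S.card ≤ m := by
    have himg : (Finset.univ.image (Fin.castLE hkn)).card = k - 1 := by
      rw [Finset.card_image_of_injective _ (Fin.castLE_injective hkn), Finset.card_univ,
        Fintype.card_fin]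
    have hsub : Finset.univ.image (Fin.castLE hkn) ⊆ Sᶜ := by
      intro i hi
      obtain ⟨j, -, rfl⟩ := Finset.mem_image.mp hi
      simp only [Finset.mem_compl, hS, Finset.mem_filter, Finset.mem_univ, true_and, not_not]
      simpa using hczero j
    have h1 : k - 1 ≤ Sᶜ.card := himg ▸ Finset.card_le_card hsub
    have h2 : Sᶜ.card = n - S.card := by
      rw [Finset.card_compl, Fintype.card_fin]
    have h3 : S.card ≤ n := (Finset.card_le_univ S).trans_eq (by simp)
    omega
  have hspos : 1 ≤ S.card := by
    obtain ⟨i, hi⟩ : ∃ i, c i ≠ 0 := by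
      by_contra h
      push_neg at h
      exact hcne (funext h)
    exact Finset.card_pos.mpr ⟨i, by simp [hS, hi]⟩
  -- choose the scaling exponent per coordinate
  have hg : ∀ i : Fin n, c i ≠ 0 → ∃ j : Fin 3,
      mWt π (gmk π (2 ^ (j:ℕ)) * c i) ≤ 1 := fun i hi => exists_scale (c i) hi
  let g : Fin n → Fin 3 := fun i => if h : c i ≠ 0 then (hg i h).choose else 0
  have hgspec : ∀ i ∈ S, mWt π (gmk π (2 ^ ((g i):ℕ)) * c i) ≤ 1 := by
    intro i hi
    have hi' : c i ≠ 0 := by simpa [hS] using hi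
    simpa only [g, dif_pos hi'] using (hg i hi').choose_spec
  -- pigeonhole
  obtain ⟨j, -, hj⟩ := Finset.exists_lt_card_fiber_of_mul_lt_card_of_maps_to
    (s := S) (t := (Finset.univ : Finset (Fin 3))) (f := g) (n := (S.card - 1) / 3)
    (fun i _ => Finset.mem_univ _) (by
      rw [Finset.card_univ, Fintype.card_fin]
      have h1 := Nat.div_add_mod (S.card - 1) 3
      have h2 := Nat.mod_lt (S.card - 1) (show 0 < 3 by norm_num)
      omega)
  have h3t : S.card ≤ 3 * (S.filter (fun i => g i = j)).card := by
    have h1 := Nat.div_add_mod (S.card - 1) 3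
    have h2 := Nat.mod_lt (S.card - 1) (show 0 < 3 by norm_num)
    have h3 : (S.card - 1) / 3 < (S.filter (fun i => g i = j)).card := hj
    omega
  have hts : (S.filter (fun i => g i = j)).card ≤ S.card :=
    Finset.card_le_card (Finset.filter_subset _ _)
  -- the scaled codeword
  set a : F := gmk π (2 ^ ((j:Fin 3):ℕ)) with ha
  have hane : a ≠ 0 := gmk_two_pow_ne j
  set c' : Fin n → F := a • c with hc'
  have hc'C : c' ∈ C := C.smul_mem a hcC
  have hc'app : ∀ i, c' i = a * c i := fun i => rfl
  have hc'ne : c' ≠ 0 := by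
    obtain ⟨i, hi⟩ : ∃ i, c i ≠ 0 := by
      by_contra h; push_neg at h; exact hcne (funext h)
    intro h
    have : c' i = 0 := congrFun h i
    rw [hc'app i] at this
    exact hi ((mul_eq_zero.mp this).resolve_left hane)
  -- bound its Mannheim weight
  have hwt : mWtVec π c' ≤ (S.filter (fun i => g i = j)).card
      + 2 * (S.card - (S.filter (fun i => g i = j)).card) := by
    have hsum0 : mWtVec π c' = ∑ i ∈ S, mWt π (c' i) := by
      rw [mWtVec]
      refine (Finset.sum_subset (Finset.subset_univ S) ?_).symm
      intro i _ hiS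
      have hci : c i = 0 := by
        by_contra h
        exact hiS (by simp [hS, h])
      rw [hc'app i, hci, mul_zero, mWt_zero]
    have hsum1 : ∑ i ∈ S, mWt π (c' i) ≤ ∑ i ∈ S, (if g i = j then 1 else 2) := by
      refine Finset.sum_le_sum ?_
      intro i hi
      by_cases h : g i = j
      · rw [if_pos h]
        have := hgspec i hi
        rw [h] at this
        rw [hc'app i]
        exact this
      · rw [if_neg h, hc'app i]
        exact mWt_le_two _
    have hsum2 : ∑ i ∈ S, (if g i = j then 1 else 2) = (S.filter (fun i => g i = j)).card
        + 2 * (S.card - (S.filter (fun i => g i = j)).card) := by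
      rw [Finset.sum_ite, Finset.sum_const, Finset.sum_const, smul_eq_mul, smul_eq_mul,
        mul_one]
      have h := Finset.card_filter_add_card_filter_not (s := S)
        (p := fun i => g i = j)
      omega
    rw [hsum0]
    exact hsum1.trans (le_of_eq hsum2)
  have hd : dPiCode π C ≤ (S.filter (fun i => g i = j)).card
      + 2 * (S.card - (S.filter (fun i => g i = j)).card) :=
    le_trans (Nat.sInf_le ⟨c', hc'C, hc'ne, rfl⟩) hwt
  refine hd.trans ?_
  omega
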